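/- arXiv:1307.0244 — 6 statements merged into one kernel-verified Lean document; each statement's English description precedes it below -/
import Mathlib

section
/- Let P be a discrete tree order: a partially ordered set in which every closed interval [x,z] is finite, every pair of incomparable elements x, y has a least common upper bound x ∨ y, and no two incomparable elements have a common lower bound. Define d(x,y) = max(Card[x, x∨y] − 1, Card[y, x∨y] − 1) for all x, y (where for comparable elements x∨y is the larger of the two). Then d satisfies the triangle inequality: for all x, y, v in P, d(x,y) ≤ d(x,v) + d(v,y). -/
/-- `C` is a maximal chain within the set `I`: a chain contained in `I` not properly
contained in any other chain contained in `I`. -/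
def IsMaxChainIn {P : Type*} [PartialOrder P] (I C : Set P) : Prop :=
  C ⊆ I ∧ IsChain (· ≤ ·) C ∧
    ∀ ⦃C' : Set P⦄, C' ⊆ I → IsChain (· ≤ ·) C' → C ⊆ C' → C' = C

/-- A poset is discrete if every maximal chain of every closed interval `[x,y]` is finite. -/
def IsDiscretePoset (P : Type*) [PartialOrder P] : Prop :=
  ∀ x y : P, ∀ C : Set P, IsMaxChainIn (Set.Icc x y) C → C.Finite

/-- The height of `y` above `x`: the least cardinality of a finite maximal chain of the
interval `[x,y]`, minus 1. -/
noncomputable def intervalHeight {P : Type*} [PartialOrder P] (x y : P) : ℕ :=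
  sInf {n : ℕ | ∃ C : Set P, IsMaxChainIn (Set.Icc x y) C ∧ C.Finite ∧ C.ncard = n + 1}

/-- The Jordan–Dedekind chain condition: in every interval `[x,y]`, all maximal chains
have the same number of elements. -/
def JordanDedekind (P : Type*) [PartialOrder P] : Prop :=
  ∀ x y : P, ∀ C C' : Set P, IsMaxChainIn (Set.Icc x y) C →
    IsMaxChainIn (Set.Icc x y) C' → C.ncard = C'.ncard

/-- The Hasse diagram of a poset: the simple undirected graph with an edge between `a`
and `b` iff one covers the other. -/
def hasseGraph (P : Type*) [PartialOrder P] : SimpleGraph P where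
  Adj a b := a ⋖ b ∨ b ⋖ a
  symm := ⟨fun a b h => h.symm⟩
  loopless := ⟨fun a h => by rcases h with h | h <;> exact h.ne rfl⟩

/-- A join semilattice is semimodular if whenever some element `z` is covered by both of
the distinct elements `x` and `y`, the join `x ⊔ y` covers both `x` and `y`. -/
def Semimodular (L : Type*) [SemilatticeSup L] : Prop :=
  ∀ x y z : L, x ≠ y → z ⋖ x → z ⋖ y → x ⋖ x ⊔ y ∧ y ⋖ x ⊔ y

lemma tree_aux {P : Type*} [PartialOrder P]
    (hfin : ∀ x z : P, (Set.Icc x z).Finite)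
    (hcomp : ∀ s t : P, (∃ l : P, l ≤ s ∧ l ≤ t) → s ≤ t ∨ t ≤ s)
    {x a b : P} (hxa : x ≤ a) (hab : a ≤ b) :
    (Set.Icc x b).ncard + 1 ≤ (Set.Icc x a).ncard + (Set.Icc a b).ncard := by
  have hsub : Set.Icc x b ⊆ Set.Icc x a ∪ (Set.Icc a b \ {a}) := by
    intro t ht
    rcases hcomp t a ⟨x, ht.1, hxa⟩ with h | h
    · exact Or.inl ⟨ht.1, h⟩
    · rcases eq_or_ne t a with rfl | hne
      · exact Or.inl ⟨ht.1, le_rfl⟩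
      · exact Or.inr ⟨⟨h, ht.2⟩, fun hmem => hne hmem⟩
  have h1 : (Set.Icc x b).ncard ≤ (Set.Icc x a ∪ (Set.Icc a b \ {a})).ncard :=
    Set.ncard_le_ncard hsub (((hfin x a).union ((hfin a b).diff)))
  have h2 : (Set.Icc x a ∪ (Set.Icc a b \ {a})).ncard ≤
      (Set.Icc x a).ncard + (Set.Icc a b \ {a}).ncard := Set.ncard_union_le _ _
  have h3 : (Set.Icc a b \ {a}).ncard = (Set.Icc a b).ncard - 1 :=
    Set.ncard_diff_singleton_of_mem (s := Set.Icc a b) ⟨le_rfl, hab⟩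
  have h4 : 0 < (Set.Icc a b).ncard := (Set.ncard_pos (hfin a b)).mpr ⟨a, le_rfl, hab⟩
  omega

/-- In a discrete tree order, the canon-law distance
`d(x,y) = max(Card[x, x∨y] − 1, Card[y, x∨y] − 1)` satisfies the triangle inequality. -/
theorem stmt0 {P : Type*} [PartialOrder P]
    (hfin : ∀ x z : P, (Set.Icc x z).Finite)
    (hlub : ∀ x y : P, ¬ x ≤ y → ¬ y ≤ x → ∃ j : P, IsLUB {x, y} j)
    (hnolb : ∀ x y : P, ¬ x ≤ y → ¬ y ≤ x → ¬ ∃ l : P, l ≤ x ∧ l ≤ y)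
    (j : P → P → P) (hj : ∀ x y : P, IsLUB {x, y} (j x y))
    (d : P → P → ℕ)
    (hd : ∀ x y : P, d x y =
      max ((Set.Icc x (j x y)).ncard - 1) ((Set.Icc y (j x y)).ncard - 1)) :
    ∀ x y v : P, d x y ≤ d x v + d v y := by
  have hcomp : ∀ s t : P, (∃ l : P, l ≤ s ∧ l ≤ t) → s ≤ t ∨ t ≤ s := by
    intro s t hl
    by_contra h
    push_neg at h
    exact hnolb s t h.1 h.2 hl
  intro x y v
  set a := j x v with ha
  set b := j v y with hb
  set c := j x y with hc
  have hxa : x ≤ a := (hj x v).1 (by simp)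
  have hva : v ≤ a := (hj x v).1 (by simp)
  have hvb : v ≤ b := (hj v y).1 (by simp)
  have hyb : y ≤ b := (hj v y).1 (by simp)
  have hxc : x ≤ c := (hj x y).1 (by simp)
  have hyc : y ≤ c := (hj x y).1 (by simp)
  rw [hd, hd, hd]
  have hAa : 0 < (Set.Icc x a).ncard := (Set.ncard_pos (hfin x a)).mpr ⟨x, le_rfl, hxa⟩
  have hBb : 0 < (Set.Icc v b).ncard := (Set.ncard_pos (hfin v b)).mpr ⟨v, le_rfl, hvb⟩
  have hA'a : 0 < (Set.Icc v a).ncard := (Set.ncard_pos (hfin v a)).mpr ⟨v, le_rfl, hva⟩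
  have hB'b : 0 < (Set.Icc y b).ncard := (Set.ncard_pos (hfin y b)).mpr ⟨y, le_rfl, hyb⟩
  rcases hcomp a b ⟨v, hva, hvb⟩ with hab | hba
  · -- a ≤ b
    have hcb : c ≤ b := (hj x y).2 (by
      intro t ht
      rcases ht with rfl | ht
      · exact le_trans hxa hab
      · simp at ht; subst ht; exact hyb)
    have e1 : (Set.Icc x c).ncard ≤ (Set.Icc x b).ncard :=
      Set.ncard_le_ncard (Set.Icc_subset_Icc le_rfl hcb) (hfin x b)
    have e2 := tree_aux hfin hcomp hxa hab
    have e3 : (Set.Icc a b).ncard ≤ (Set.Icc v b).ncard :=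
      Set.ncard_le_ncard (Set.Icc_subset_Icc hva le_rfl) (hfin v b)
    have e4 : (Set.Icc y c).ncard ≤ (Set.Icc y b).ncard :=
      Set.ncard_le_ncard (Set.Icc_subset_Icc le_rfl hcb) (hfin y b)
    apply max_le
    · calc (Set.Icc x c).ncard - 1
          ≤ ((Set.Icc x a).ncard - 1) + ((Set.Icc v b).ncard - 1) := by omega
        _ ≤ _ := add_le_add (le_max_left _ _) (le_max_left _ _)
    · calc (Set.Icc y c).ncard - 1
          ≤ 0 + ((Set.Icc y b).ncard - 1) := by omega
        _ ≤ _ := add_le_add (Nat.zero_le _) (le_max_right _ _)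
  · -- b ≤ a
    have hca : c ≤ a := (hj x y).2 (by
      intro t ht
      rcases ht with rfl | ht
      · exact hxa
      · simp at ht; subst ht; exact le_trans hyb hba)
    have e1 : (Set.Icc y c).ncard ≤ (Set.Icc y a).ncard :=
      Set.ncard_le_ncard (Set.Icc_subset_Icc le_rfl hca) (hfin y a)
    have e2 := tree_aux hfin hcomp hyb hba
    have e3 : (Set.Icc b a).ncard ≤ (Set.Icc v a).ncard :=
      Set.ncard_le_ncard (Set.Icc_subset_Icc hvb le_rfl) (hfin v a)
    have e4 : (Set.Icc x c).ncard ≤ (Set.Icc x a).ncard :=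
      Set.ncard_le_ncard (Set.Icc_subset_Icc le_rfl hca) (hfin x a)
    apply max_le
    · calc (Set.Icc x c).ncard - 1
          ≤ ((Set.Icc x a).ncard - 1) + 0 := by omega
        _ ≤ _ := add_le_add (le_max_left _ _) (Nat.zero_le _)
    · calc (Set.Icc y c).ncard - 1
          ≤ ((Set.Icc v a).ncard - 1) + ((Set.Icc y b).ncard - 1) := by omega
        _ ≤ _ := add_le_add (le_max_right _ _) (le_max_right _ _)
end

section
/- Let P be a discrete partially ordered set (every maximal chain in every closed interval [x,y] is finite) satisfying the upper filtering property (any two elements have a common upper bound) and the Jordan-Dedekind chain condition (in every interval [x,y], all maximal chains have the same number of elements). Then the zigzag distance on P is chain-compatible: for all x ≤ y in P, the graph distance between x and y in the Hasse diagram of P equals the height h(x,y). -/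
section Aux
variable {P : Type*} [PartialOrder P]

lemma exists_maxChainIn (x y : P) : ∃ C, IsMaxChainIn (Set.Icc x y) C := by
  obtain ⟨t, ht, -⟩ := (IsChain.empty (r := (· ≤ ·)) (α := Set.Icc x y)).exists_maxChain
  refine ⟨Subtype.val '' t, Set.image_subset_iff.2 fun a _ => a.2, ?_, ?_⟩
  · rintro _ ⟨a, ha, rfl⟩ _ ⟨b, hb, rfl⟩ hne
    exact ht.1 ha hb (fun h => hne (congrArg _ h))
  · intro C' hC'I hC'chain hsub
    have ht' : t = {a : Set.Icc x y | ↑a ∈ C'} := by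
      refine ht.2 ?_ fun a ha => hsub ⟨a, ha, rfl⟩
      intro a ha b hb hne
      exact hC'chain ha hb (fun h => hne (Subtype.ext h))
    ext c
    constructor
    · intro hc
      have : (⟨c, hC'I hc⟩ : Set.Icc x y) ∈ t := by rw [ht']; exact hc
      exact ⟨_, this, rfl⟩
    · rintro ⟨a, ha, rfl⟩
      rw [ht'] at ha; exact ha

lemma left_mem_maxChainIn {x y : P} (hxy : x ≤ y) {C : Set P}
    (hC : IsMaxChainIn (Set.Icc x y) C) : x ∈ C := by
  have h := hC.2.2 (C' := insert x C) ?_ ?_ (Set.subset_insert _ _)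
  · rw [← h]; exact Set.mem_insert _ _
  · exact Set.insert_subset ⟨le_rfl, hxy⟩ hC.1
  · exact hC.2.1.insert (fun b hb _ => Or.inl (hC.1 hb).1)

lemma right_mem_maxChainIn {x y : P} (hxy : x ≤ y) {C : Set P}
    (hC : IsMaxChainIn (Set.Icc x y) C) : y ∈ C := by
  have h := hC.2.2 (C' := insert y C) ?_ ?_ (Set.subset_insert _ _)
  · rw [← h]; exact Set.mem_insert _ _
  · exact Set.insert_subset ⟨hxy, le_rfl⟩ hC.1
  · exact hC.2.1.insert (fun b hb _ => Or.inr (hC.1 hb).2)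

/-- With JD and discreteness, any maximal chain computes the height. -/
lemma ncard_maxChainIn (hdisc : IsDiscretePoset P)
    (hJD : JordanDedekind P) {x y : P} (hxy : x ≤ y) {C : Set P}
    (hC : IsMaxChainIn (Set.Icc x y) C) : C.ncard = intervalHeight x y + 1 := by
  have hfin : C.Finite := hdisc x y C hC
  have hne : C.Nonempty := ⟨x, left_mem_maxChainIn hxy hC⟩
  have hpos : 1 ≤ C.ncard := (Set.ncard_pos hfin).2 hne
  have hmem : C.ncard - 1 ∈ {n : ℕ | ∃ C' : Set P,
      IsMaxChainIn (Set.Icc x y) C' ∧ C'.Finite ∧ C'.ncard = n + 1} :=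
    ⟨C, hC, hfin, by omega⟩
  have hall : ∀ n ∈ {n : ℕ | ∃ C' : Set P,
      IsMaxChainIn (Set.Icc x y) C' ∧ C'.Finite ∧ C'.ncard = n + 1}, n = C.ncard - 1 := by
    rintro n ⟨C', hC', -, hcard⟩
    have := hJD x y C C' hC hC'
    omega
  have : intervalHeight x y = C.ncard - 1 := by
    apply le_antisymm (Nat.sInf_le hmem)
    exact le_csInf ⟨_, hmem⟩ fun n hn => (hall n hn).ge
  omega

lemma maxChainIn_self (y : P) : IsMaxChainIn (Set.Icc y y) {y} := by
  refine ⟨by simp, Set.subsingleton_singleton.isChain, fun C' hC'I _ hsub => ?_⟩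
  apply Set.Subset.antisymm _ hsub
  intro c hc
  have := hC'I hc
  simp only [Set.Icc_self, Set.mem_singleton_iff] at this ⊢
  exact this

lemma intervalHeight_self (hdisc : IsDiscretePoset P) (hJD : JordanDedekind P) (y : P) :
    intervalHeight y y = 0 := by
  have := ncard_maxChainIn hdisc hJD le_rfl (maxChainIn_self y)
  simpa using this.symm

lemma maxChainIn_pair {x y : P} (h : x ⋖ y) : IsMaxChainIn (Set.Icc x y) {x, y} := by
  refine ⟨?_, by rintro a (rfl | rfl) b (rfl | rfl) hne <;> simp [h.le, hne],
    fun C' hC'I hC'chain hsub => ?_⟩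
  · rintro a (rfl | rfl); exacts [⟨le_rfl, h.le⟩, ⟨h.le, le_rfl⟩]
  · apply Set.Subset.antisymm _ hsub
    intro c hc
    obtain ⟨h1, h2⟩ := hC'I hc
    rcases h1.lt_or_eq with h1 | rfl
    · rcases h2.lt_or_eq with h2 | rfl
      · exact absurd h1 (h.2 · h2)
      · exact Or.inr rfl
    · exact Or.inl rfl

lemma intervalHeight_covBy (hdisc : IsDiscretePoset P) (hJD : JordanDedekind P)
    {x y : P} (h : x ⋖ y) : intervalHeight x y = 1 := by
  have := ncard_maxChainIn hdisc hJD h.le (maxChainIn_pair h)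
  rw [Set.ncard_pair h.ne] at this
  omega

lemma intervalHeight_add (hdisc : IsDiscretePoset P) (hJD : JordanDedekind P)
    {x y z : P} (hxy : x ≤ y) (hyz : y ≤ z) :
    intervalHeight x z = intervalHeight x y + intervalHeight y z := by
  obtain ⟨C1, hC1⟩ := exists_maxChainIn x y
  obtain ⟨C2, hC2⟩ := exists_maxChainIn y z
  have hy1 : y ∈ C1 := right_mem_maxChainIn hxy hC1
  have hy2 : y ∈ C2 := left_mem_maxChainIn hyz hC2
  have hsub1 : C1 ⊆ Set.Icc x z := fun c hc => ⟨(hC1.1 hc).1, (hC1.1 hc).2.trans hyz⟩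
  have hsub2 : C2 ⊆ Set.Icc x z := fun c hc => ⟨hxy.trans (hC2.1 hc).1, (hC2.1 hc).2⟩
  have hU : IsMaxChainIn (Set.Icc x z) (C1 ∪ C2) := by
    refine ⟨Set.union_subset hsub1 hsub2, ?_, ?_⟩
    · rintro a (ha | ha) b (hb | hb) hne
      · exact hC1.2.1 ha hb hne
      · exact Or.inl ((hC1.1 ha).2.trans (hC2.1 hb).1)
      · exact Or.inr ((hC1.1 hb).2.trans (hC2.1 ha).1)
      · exact hC2.2.1 ha hb hne
    · intro C' hC'I hC'chain hsub
      have hA : C' ∩ Set.Icc x y = C1 := by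
        refine hC1.2.2 Set.inter_subset_right (hC'chain.mono Set.inter_subset_left) ?_
        exact fun c hc => ⟨hsub (Or.inl hc), hC1.1 hc⟩
      have hB : C' ∩ Set.Icc y z = C2 := by
        refine hC2.2.2 Set.inter_subset_right (hC'chain.mono Set.inter_subset_left) ?_
        exact fun c hc => ⟨hsub (Or.inr hc), hC2.1 hc⟩
      apply Set.Subset.antisymm _ hsub
      intro c hc
      have hyC' : y ∈ C' := hsub (Or.inl hy1)
      rcases eq_or_ne c y with rfl | hne
      · exact Or.inl hy1
      · rcases hC'chain hc hyC' hne with h | h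
        · exact Or.inl (hA ▸ ⟨hc, (hC'I hc).1, h⟩)
        · exact Or.inr (hB ▸ ⟨hc, h, (hC'I hc).2⟩)
  have hint : C1 ∩ C2 = {y} := by
    apply Set.Subset.antisymm
    · rintro c ⟨h1, h2⟩
      exact le_antisymm (hC1.1 h1).2 (hC2.1 h2).1
    · rintro c rfl; exact ⟨hy1, hy2⟩
  have hf1 : C1.Finite := hdisc x y C1 hC1
  have hf2 : C2.Finite := hdisc y z C2 hC2
  have hcard := Set.ncard_union_add_ncard_inter C1 C2 hf1 hf2
  rw [hint, Set.ncard_singleton] at hcard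
  have e1 := ncard_maxChainIn hdisc hJD hxy hC1
  have e2 := ncard_maxChainIn hdisc hJD hyz hC2
  have e3 := ncard_maxChainIn hdisc hJD (hxy.trans hyz) hU
  omega

lemma exists_walk_of_maxChainIn (hdisc : IsDiscretePoset P) :
    ∀ n : ℕ, ∀ x y : P, x ≤ y → ∀ C : Set P, IsMaxChainIn (Set.Icc x y) C →
      C.ncard = n + 1 → ∃ w : (hasseGraph P).Walk x y, w.length = n := by
  intro n
  induction n with
  | zero =>
    intro x y hxy C hC hcard
    have hx : x ∈ C := left_mem_maxChainIn hxy hC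
    have hy : y ∈ C := right_mem_maxChainIn hxy hC
    have : x = y := by
      obtain ⟨a, rfl⟩ := Set.ncard_eq_one.1 hcard
      rw [Set.mem_singleton_iff] at hx hy; rw [hx, hy]
    subst this
    exact ⟨SimpleGraph.Walk.nil, rfl⟩
  | succ n IH =>
    intro x y hxy C hC hcard
    have hfin : C.Finite := hdisc x y C hC
    have hx : x ∈ C := left_mem_maxChainIn hxy hC
    have hy : y ∈ C := right_mem_maxChainIn hxy hC
    have hne : x ≠ y := by
      rintro rfl
      have : C ⊆ {x} := by rw [← Set.Icc_self]; exact hC.1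
      have := Set.ncard_le_ncard this (Set.finite_singleton x)
      simp [Set.ncard_singleton] at this
      omega
    have hDne : (C \ {x}).Nonempty := ⟨y, hy, hne ∘ Eq.symm⟩
    obtain ⟨x', ⟨hx'C, hx'ne⟩, hmin⟩ :=
      (hfin.diff (t := {x})).exists_minimal hDne
    simp only [Set.mem_singleton_iff] at hx'ne
    have hmin' : ∀ c ∈ C \ {x}, x' ≤ c := by
      rintro c ⟨hcC, hcne⟩
      simp only [Set.mem_singleton_iff] at hcne
      rcases eq_or_ne x' c with rfl | hne'
      · exact le_rfl
      rcases hC.2.1 hx'C hcC hne' with h | h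
      · exact h
      · have : x' = c := le_antisymm (hmin ⟨hcC, hcne⟩ h) h
        exact this.le
    have hxx' : x < x' := lt_of_le_of_ne (hC.1 hx'C).1 (Ne.symm hx'ne)
    have hx'y : x' ≤ y := (hC.1 hx'C).2
    have hcov : x ⋖ x' := by
      refine ⟨hxx', fun z hz1 hz2 => ?_⟩
      have hzI : z ∈ Set.Icc x y := ⟨hz1.le, hz2.le.trans hx'y⟩
      have hchain : IsChain (· ≤ ·) (insert z C) := by
        refine hC.2.1.insert fun c hc hne2 => ?_
        rcases eq_or_ne c x with rfl | hcx
        · exact Or.inr hz1.le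
        · exact Or.inl (hz2.le.trans (hmin' c ⟨hc, by simpa using hcx⟩))
      have heq := hC.2.2 (Set.insert_subset hzI hC.1) hchain (Set.subset_insert _ _)
      have hzC : z ∈ C := heq ▸ Set.mem_insert _ _
      have : x' ≤ z := hmin' z ⟨hzC, by simpa using hz1.ne'⟩
      exact absurd hz2 this.not_gt
    have hD : IsMaxChainIn (Set.Icc x' y) (C \ {x}) := by
      refine ⟨fun c hc => ⟨hmin' c hc, (hC.1 hc.1).2⟩, hC.2.1.mono Set.diff_subset, ?_⟩
      intro C' hC'I hC'chain hsub
      have hins : insert x C' = C := by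
        refine hC.2.2 ?_ ?_ ?_
        · exact Set.insert_subset ⟨le_rfl, hxy⟩
            (fun c hc => ⟨hxx'.le.trans (hC'I hc).1, (hC'I hc).2⟩)
        · exact hC'chain.insert fun c hc _ => Or.inl (hxx'.le.trans (hC'I hc).1)
        · intro c hc
          rcases eq_or_ne c x with rfl | hcx
          · exact Set.mem_insert _ _
          · exact Set.mem_insert_of_mem _ (hsub ⟨hc, by simpa using hcx⟩)
      apply Set.Subset.antisymm _ hsub
      intro c hc
      have hcC : c ∈ C := hins ▸ Set.mem_insert_of_mem _ hc
      refine ⟨hcC, ?_⟩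
      simp only [Set.mem_singleton_iff]
      rintro rfl
      exact absurd ((hC'I hc).1) hxx'.not_ge
    have hcard' : (C \ {x}).ncard = n + 1 := by
      rw [Set.ncard_diff_singleton_of_mem hx]; omega
    obtain ⟨w', hw'⟩ := IH x' y hx'y (C \ {x}) hD hcard'
    exact ⟨SimpleGraph.Walk.cons (show (hasseGraph P).Adj x x' from Or.inl hcov) w', by simp [hw']⟩

lemma height_transfer (hdisc : IsDiscretePoset P)
    (hfilt : ∀ x y : P, ∃ u : P, x ≤ u ∧ y ≤ u) (hJD : JordanDedekind P)
    {a b u u' : P} (hau : a ≤ u) (hbu : b ≤ u) (hau' : a ≤ u') (hbu' : b ≤ u') :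
    intervalHeight a u + intervalHeight b u' = intervalHeight a u' + intervalHeight b u := by
  obtain ⟨w, huw, hu'w⟩ := hfilt u u'
  have e1 := intervalHeight_add hdisc hJD hau huw
  have e2 := intervalHeight_add hdisc hJD hbu huw
  have e3 := intervalHeight_add hdisc hJD hau' hu'w
  have e4 := intervalHeight_add hdisc hJD hbu' hu'w
  omega

lemma walk_bound (hdisc : IsDiscretePoset P)
    (hfilt : ∀ x y : P, ∃ u : P, x ≤ u ∧ y ≤ u) (hJD : JordanDedekind P) :
    ∀ {a b : P} (w : (hasseGraph P).Walk a b) (u : P), a ≤ u → b ≤ u →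
      intervalHeight a u ≤ intervalHeight b u + w.length ∧
      intervalHeight b u ≤ intervalHeight a u + w.length := by
  intro a b w
  induction w with
  | nil => intro u _ _; simp
  | @cons a c b h p IH =>
    intro u hau hbu
    obtain ⟨u', huu', hcu'⟩ := hfilt u c
    have hau' : a ≤ u' := hau.trans huu'
    have hbu' : b ≤ u' := hbu.trans huu'
    have IH' := IH u' hcu' hbu'
    have h' : a ⋖ c ∨ c ⋖ a := h
    have hedge : intervalHeight a u' = intervalHeight c u' + 1 ∨
        intervalHeight c u' = intervalHeight a u' + 1 := by
      rcases h' with h' | h'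
      · left
        rw [intervalHeight_add hdisc hJD h'.le hcu', intervalHeight_covBy hdisc hJD h']
        omega
      · right
        rw [intervalHeight_add hdisc hJD h'.le hau', intervalHeight_covBy hdisc hJD h']
        omega
    have ht1 := height_transfer hdisc hfilt hJD hau hbu hau' hbu'
    simp only [SimpleGraph.Walk.length_cons]
    omega

end Aux

/-- In a discrete upper-filtering poset satisfying the Jordan–Dedekind chain condition,
the zigzag distance is chain-compatible: for `x ≤ y` it equals the height `h(x,y)`. -/
theorem stmt1 {P : Type*} [PartialOrder P]
    (hdisc : IsDiscretePoset P)
    (hfilt : ∀ x y : P, ∃ u : P, x ≤ u ∧ y ≤ u)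
    (hJD : JordanDedekind P) :
    ∀ x y : P, x ≤ y → (hasseGraph P).dist x y = intervalHeight x y := by
  intro x y hxy
  obtain ⟨C, hC⟩ := exists_maxChainIn x y
  have hcard := ncard_maxChainIn hdisc hJD hxy hC
  obtain ⟨w, hw⟩ := exists_walk_of_maxChainIn hdisc (intervalHeight x y) x y hxy C hC hcard
  have hle : (hasseGraph P).dist x y ≤ intervalHeight x y := hw ▸ SimpleGraph.dist_le w
  have hreach : (hasseGraph P).Reachable x y := ⟨w⟩
  obtain ⟨p, hp⟩ := hreach.exists_walk_length_eq_dist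
  have hb := (walk_bound hdisc hfilt hJD p y hxy le_rfl).1
  rw [intervalHeight_self hdisc hJD, hp] at hb
  omega
end

section
/- Every discrete, semimodular join semilattice satisfies the Jordan-Dedekind chain condition: in every interval [x,y], all maximal chains have the same number of elements. -/
section Aux
variable {P : Type*} [PartialOrder P]

lemma maxChainIn_mem {x y : P} {C : Set P}
    (h : IsMaxChainIn (Set.Icc x y) C) (hxy : x ≤ y) : x ∈ C ∧ y ∈ C := by
  obtain ⟨hsub, hch, hmax⟩ := h
  constructor
  · have : insert x C = C := hmax
      (by rintro u (rfl | hu); exacts [⟨le_rfl, hxy⟩, hsub hu])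
      (hch.insert fun b hb _ => Or.inl (hsub hb).1) (Set.subset_insert _ _)
    rw [← this]; exact Set.mem_insert _ _
  · have : insert y C = C := hmax
      (by rintro u (rfl | hu); exacts [⟨hxy, le_rfl⟩, hsub hu])
      (hch.insert fun b hb _ => Or.inr (hsub hb).2) (Set.subset_insert _ _)
    rw [← this]; exact Set.mem_insert _ _

lemma exists_maxChainIn_s4 (I : Set P) {C : Set P}
    (hCI : C ⊆ I) (hC : IsChain (· ≤ ·) C) : ∃ M, IsMaxChainIn I M ∧ C ⊆ M := by
  have hs : IsChain (· ≤ ·) {p : ↥I | (p : P) ∈ C} := fun a ha b hb hab =>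
    (hC ha hb (fun h => hab (Subtype.ext h))).imp id id
  obtain ⟨t, ⟨htc, htm⟩, hst⟩ := hs.exists_maxChain
  refine ⟨Subtype.val '' t, ⟨?_, ?_, ?_⟩, ?_⟩
  · rintro u ⟨p, hp, rfl⟩; exact p.2
  · rintro u ⟨p, hp, rfl⟩ v ⟨q, hq, rfl⟩ huv
    exact (htc hp hq (fun h => huv (congrArg _ h))).imp id id
  · intro D hDI hDc hMD
    have hDch : IsChain (· ≤ ·) {p : ↥I | (p : P) ∈ D} := fun a ha b hb hab =>
      (hDc ha hb (fun h => hab (Subtype.ext h))).imp id id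
    have heq : t = {p : ↥I | (p : P) ∈ D} :=
      htm hDch (fun p hp => hMD ⟨p, hp, rfl⟩)
    ext u; constructor
    · intro hu
      refine ⟨⟨u, hDI hu⟩, ?_, rfl⟩
      rw [heq]; exact hu
    · rintro ⟨p, hp, rfl⟩
      rw [heq] at hp; exact hp
  · intro u hu; exact ⟨⟨u, hCI hu⟩, hst hu, rfl⟩

lemma maxChainIn_step {x y : P} {C : Set P}
    (h : IsMaxChainIn (Set.Icc x y) C) (hfin : C.Finite) (hxy : x < y) :
    ∃ c, x ⋖ c ∧ c ≤ y ∧ IsMaxChainIn (Set.Icc c y) (C \ {x}) ∧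
      C = insert x (C \ {x}) ∧ x ∉ C \ {x} := by
  obtain ⟨hxC, hyC⟩ := maxChainIn_mem h hxy.le
  have hSne : (C \ {x}).Nonempty := ⟨y, hyC, fun hy => hxy.ne (congrArg id hy).symm⟩
  obtain ⟨c, hcS, hcmin⟩ : ∃ c ∈ C \ {x}, ∀ u ∈ C \ {x}, id u ≤ id c → id c = id u := by
    obtain ⟨c, hc, hm⟩ := Set.Finite.exists_minimalFor id _ hfin.diff hSne
    exact ⟨c, hc, fun u hu hh => le_antisymm (hm hu hh) hh⟩
  have hcC : c ∈ C := hcS.1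
  have hleast : ∀ u ∈ C \ {x}, c ≤ u := by
    intro u huS
    rcases eq_or_ne u c with rfl | hne
    · exact le_rfl
    rcases h.2.1 hcC huS.1 (fun hh => hne hh.symm) with hh | hh
    · exact hh
    · exact le_of_eq (by simpa using hcmin u huS hh)
  have hxltc : x < c := lt_of_le_of_ne (h.1 hcC).1 (fun hh => hcS.2 hh.symm)
  have hcy : c ≤ y := (h.1 hcC).2
  have hcov : x ⋖ c := by
    refine ⟨hxltc, fun w hxw hwc => ?_⟩
    have hwC : w ∉ C := by
      intro hwC
      rcases eq_or_ne w x with rfl | hwx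
      · exact absurd rfl hxw.ne'
      · exact absurd (hleast w ⟨hwC, hwx⟩) hwc.not_ge
    have : insert w C = C := h.2.2
      (by rintro u (rfl | hu)
          exacts [⟨hxw.le, hwc.le.trans hcy⟩, h.1 hu])
      (h.2.1.insert (by
        intro b hb _
        rcases eq_or_ne b x with rfl | hbx
        · exact Or.inr hxw.le
        · exact Or.inl (hwc.le.trans (hleast b ⟨hb, hbx⟩))))
      (Set.subset_insert _ _)
    exact hwC (this ▸ Set.mem_insert w C)
  have hCins : C = insert x (C \ {x}) := (Set.insert_diff_singleton.trans
    (Set.insert_eq_self.mpr hxC)).symm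
  refine ⟨c, hcov, hcy, ⟨?_, h.2.1.mono Set.diff_subset, ?_⟩, hCins,
    fun hh => hh.2 rfl⟩
  · intro u hu; exact ⟨hleast u hu, (h.1 hu.1).2⟩
  · intro D hDI hDc hSD
    have hxD : x ∉ D := fun hxD => absurd (hDI hxD).1 hxltc.not_ge
    have : insert x D = C := h.2.2
      (by rintro u (rfl | hu)
          exacts [⟨le_rfl, hxy.le⟩, ⟨hxltc.le.trans (hDI hu).1, (hDI hu).2⟩])
      (hDc.insert fun b hb _ => Or.inl (hxltc.le.trans (hDI hb).1))
      (by rw [hCins]; exact Set.insert_subset_insert hSD)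
    apply subset_antisymm
    · intro u hu
      refine ⟨this ▸ Set.mem_insert_of_mem x hu, fun huxx => ?_⟩
      exact hxD (by rwa [huxx] at hu)
    · exact hSD

lemma maxChainIn_insert {x c y : P} {E : Set P}
    (hxc : x ⋖ c) (hcy : c ≤ y) (hE : IsMaxChainIn (Set.Icc c y) E) :
    IsMaxChainIn (Set.Icc x y) (insert x E) ∧ x ∉ E := by
  have hcE : c ∈ E := (maxChainIn_mem hE hcy).1
  have hxE : x ∉ E := fun h => absurd (hE.1 h).1 hxc.lt.not_ge
  refine ⟨⟨?_, ?_, ?_⟩, hxE⟩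
  · rintro u (rfl | hu)
    · exact ⟨le_rfl, hxc.le.trans hcy⟩
    · exact ⟨hxc.le.trans (hE.1 hu).1, (hE.1 hu).2⟩
  · exact hE.2.1.insert fun b hb _ => Or.inl (hxc.le.trans (hE.1 hb).1)
  · intro D hDI hDc hsub
    have hcD : c ∈ D := hsub (Set.mem_insert_of_mem _ hcE)
    have key : ∀ d ∈ D, d = x ∨ d ∈ Set.Icc c y := by
      intro d hd
      rcases eq_or_ne d c with rfl | hdc
      · exact Or.inr ⟨le_rfl, (hDI hd).2⟩
      rcases hDc hd hcD hdc with hh | hh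
      · left
        by_contra hne
        exact hxc.2 (lt_of_le_of_ne (hDI hd).1 (Ne.symm hne)) (lt_of_le_of_ne hh hdc)
      · exact Or.inr ⟨hh, (hDI hd).2⟩
    have hDE : D ∩ Set.Icc c y = E := hE.2.2 Set.inter_subset_right
      (hDc.mono Set.inter_subset_left)
      (fun u hu => ⟨hsub (Set.mem_insert_of_mem _ hu), hE.1 hu⟩)
    apply subset_antisymm
    · intro u hu
      rcases key u hu with rfl | hh
      · exact Set.mem_insert _ _
      · exact Set.mem_insert_of_mem _ (hDE ▸ (⟨hu, hh⟩ : u ∈ D ∩ Set.Icc c y))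
    · exact hsub

end Aux

/-- Every discrete, semimodular join semilattice satisfies the Jordan–Dedekind chain
condition. -/
theorem stmt4 {L : Type*} [SemilatticeSup L]
    (hdisc : IsDiscretePoset L) (hsm : Semimodular L) :
    JordanDedekind L := by
  suffices key : ∀ n : ℕ, ∀ x y : L, ∀ C C' : Set L, IsMaxChainIn (Set.Icc x y) C →
      IsMaxChainIn (Set.Icc x y) C' → C.ncard = n → C'.ncard = n by
    intro x y C C' hC hC'
    exact (key _ x y C C' hC hC' rfl).symm
  intro n
  induction n using Nat.strong_induction_on with
  | _ n IH =>
  intro x y C C' hC hC' hn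
  have hCf := hdisc x y C hC
  have hC'f := hdisc x y C' hC'
  by_cases hxy : x ≤ y
  swap
  · have hIe : Set.Icc x y = ∅ := Set.Icc_eq_empty hxy
    have hCe : C = ∅ := Set.subset_empty_iff.mp (hIe ▸ hC.1)
    have hC'e : C' = ∅ := Set.subset_empty_iff.mp (hIe ▸ hC'.1)
    rw [hC'e, ← hn, hCe]
  rcases eq_or_lt_of_le hxy with rfl | hlt
  · have hIcc : Set.Icc x x = {x} := Set.Icc_self x
    have hCeq : C = {x} := subset_antisymm (hIcc ▸ hC.1)
      (Set.singleton_subset_iff.mpr (maxChainIn_mem hC le_rfl).1)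
    have hC'eq : C' = {x} := subset_antisymm (hIcc ▸ hC'.1)
      (Set.singleton_subset_iff.mpr (maxChainIn_mem hC' le_rfl).1)
    rw [hC'eq, ← hn, hCeq]
  · obtain ⟨c, hxc, hcy, hS, hCins, hxS⟩ := maxChainIn_step hC hCf hlt
    obtain ⟨d, hxd, hdy, hS', hC'ins, hxS'⟩ := maxChainIn_step hC' hC'f hlt
    have hSf : (C \ {x}).Finite := hCf.diff
    have hS'f : (C' \ {x}).Finite := hC'f.diff
    have hcard : (C \ {x}).ncard + 1 = n := by
      rw [← hn]
      conv_rhs => rw [hCins]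
      rw [Set.ncard_insert_of_notMem hxS hSf]
    have hlt' : (C \ {x}).ncard < n := by omega
    have goal' : (C' \ {x}).ncard = (C \ {x}).ncard → C'.ncard = n := by
      intro h
      rw [hC'ins, Set.ncard_insert_of_notMem hxS' hS'f, h, hcard]
    rcases eq_or_ne c d with rfl | hcd
    · exact goal' (IH _ hlt' c y _ _ hS hS' rfl)
    · obtain ⟨hcz, hdz⟩ := hsm c d x hcd hxc hxd
      have hzy : c ⊔ d ≤ y := sup_le hcy hdy
      obtain ⟨E, hE, -⟩ := exists_maxChainIn_s4 (Set.Icc (c ⊔ d) y)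
        (Set.empty_subset _) (by simp [IsChain])
      have hEf : E.Finite := hdisc _ _ _ hE
      obtain ⟨hF, hcE⟩ := maxChainIn_insert hcz hzy hE
      obtain ⟨hF', hdE⟩ := maxChainIn_insert hdz hzy hE
      have h1 : (insert c E).ncard = (C \ {x}).ncard := IH _ hlt' c y _ _ hS hF rfl
      have h2 : (insert d E).ncard = (C \ {x}).ncard := by
        rw [Set.ncard_insert_of_notMem hdE hEf,
          ← Set.ncard_insert_of_notMem hcE hEf, h1]
      exact goal' (IH _ hlt' d y _ _ hF' hS' h2)
end

section
/- Let L be a discrete, semimodular join semilattice (every maximal chain in every closed interval is finite; whenever an element z is covered by both x and y, the join x ∨ y covers both x and y). Then the up-down distance d(x,y) = min over common upper bounds u of x and y of h(x,u) + h(y,u) satisfies the triangle inequality: d(x,z) ≤ d(x,y) + d(y,z) for all x, y, z in L. -/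
section Aux
variable {P : Type*} [PartialOrder P]

lemma covchain_le {f : ℕ → P} {n : ℕ} (hf : ∀ i < n, f i ⋖ f (i + 1)) :
    ∀ j ≤ n, ∀ i ≤ j, f i ≤ f j := by
  intro j
  induction j with
  | zero => intro _ i hi; interval_cases i; rfl
  | succ m ih =>
    intro hm i hi
    rcases Nat.lt_or_ge i (m + 1) with h | h
    · exact (ih (by omega) i (by omega)).trans (hf m (by omega)).le
    · have : i = m + 1 := by omega
      subst this; rfl

lemma covchain_lt {f : ℕ → P} {n : ℕ} (hf : ∀ i < n, f i ⋖ f (i + 1)) :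
    ∀ j ≤ n, ∀ i < j, f i < f j := by
  intro j hj i hij
  obtain ⟨m, rfl⟩ : ∃ m, j = m + 1 := ⟨j - 1, by omega⟩
  exact lt_of_le_of_lt (covchain_le hf m (by omega) i (by omega)) (hf m (by omega)).lt

lemma covchain_isMaxChainIn {f : ℕ → P} {n : ℕ} (hf : ∀ i < n, f i ⋖ f (i + 1)) :
    IsMaxChainIn (Set.Icc (f 0) (f n)) (f '' Set.Iic n) := by
  classical
  refine ⟨?_, ?_, ?_⟩
  · rintro _ ⟨i, hi, rfl⟩
    exact ⟨covchain_le hf i hi 0 (Nat.zero_le _), covchain_le hf n le_rfl i hi⟩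
  · rintro _ ⟨i, hi, rfl⟩ _ ⟨j, hj, rfl⟩ _
    rcases le_total i j with h | h
    · exact Or.inl (covchain_le hf j hj i h)
    · exact Or.inr (covchain_le hf i hi j h)
  · intro C' hsubI hchain hsub
    refine Set.Subset.antisymm ?_ hsub
    intro c hc
    obtain ⟨hc0, hcn⟩ := hsubI hc
    obtain ⟨k, hkn, hkc, hgr⟩ : ∃ k, k ≤ n ∧ f k ≤ c ∧ (k < n → ¬ f (k + 1) ≤ c) :=
      ⟨Nat.findGreatest (fun i => f i ≤ c) n, Nat.findGreatest_le n,
        Nat.findGreatest_spec (P := fun i => f i ≤ c) (Nat.zero_le _) hc0,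
        fun h => Nat.findGreatest_is_greatest (P := fun i => f i ≤ c) (Nat.lt_succ_self _) (Nat.succ_le_of_lt h)⟩
    rcases eq_or_lt_of_le hkn with heq | hlt
    · have : c = f n := le_antisymm hcn (heq ▸ hkc)
      exact ⟨n, Set.mem_Iic.mpr le_rfl, this.symm⟩
    · have hnk : ¬ f (k + 1) ≤ c := hgr hlt
      have hmem : f (k + 1) ∈ C' := hsub ⟨k + 1, Set.mem_Iic.mpr (by omega), rfl⟩
      have hne : c ≠ f (k + 1) := fun h => hnk (h ▸ le_rfl)
      have hcomp := hchain hc hmem hne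
      have hclt : c < f (k + 1) := by
        rcases hcomp with h | h
        · exact lt_of_le_of_ne h hne
        · exact absurd h hnk
      rcases eq_or_lt_of_le hkc with h | h
      · exact ⟨k, Set.mem_Iic.mpr (by omega), h⟩
      · exact absurd hclt ((hf k hlt).2 h)

lemma covchain_ncard {f : ℕ → P} {n : ℕ} (hf : ∀ i < n, f i ⋖ f (i + 1)) :
    (f '' Set.Iic n).ncard = n + 1 := by
  have hinj : Set.InjOn f (Set.Iic n) := by
    intro i hi j hj hij
    by_contra hne
    rcases Nat.lt_or_ge i j with h | h
    · exact absurd hij (covchain_lt hf j hj i h).ne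
    · exact absurd hij.symm (covchain_lt hf i hi j (by omega)).ne
  rw [Set.ncard_image_of_injOn hinj]
  have : (Set.Iic n) = ↑(Finset.Iic n) := by simp
  rw [this, Set.ncard_coe_finset]; simp

lemma intervalHeight_le_covchain {f : ℕ → P} {n : ℕ} {x y : P}
    (h0 : f 0 = x) (hn : f n = y) (hf : ∀ i < n, f i ⋖ f (i + 1)) :
    intervalHeight x y ≤ n := by
  apply Nat.sInf_le
  refine ⟨f '' Set.Iic n, ?_, (Set.finite_Iic n).image f, covchain_ncard hf⟩
  rw [← h0, ← hn]
  exact covchain_isMaxChainIn hf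

lemma intervalHeight_self_le (x : P) : intervalHeight x x ≤ 0 :=
  intervalHeight_le_covchain (f := fun _ => x) (n := 0) rfl rfl (by omega)

lemma intervalHeight_covby_le {x y : P} (h : x ⋖ y) : intervalHeight x y ≤ 1 := by
  apply intervalHeight_le_covchain (f := fun i => if i = 0 then x else y) (n := 1) rfl rfl
  intro i hi
  interval_cases i
  simpa using h

lemma exists_isMaxChainIn (x y : P) (hxy : x ≤ y) :
    ∃ C, IsMaxChainIn (Set.Icc x y) C := by
  classical
  set S := Set.Icc x y
  have hxS : x ∈ S := ⟨le_rfl, hxy⟩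
  have hyS : y ∈ S := ⟨hxy, le_rfl⟩
  have hc : IsChain (· ≤ ·) ({⟨x, hxS⟩, ⟨y, hyS⟩} : Set S) := by
    intro a ha b hb hab
    rcases ha with rfl | ha <;> rcases hb with rfl | hb
    · exact absurd rfl hab
    · rw [Set.mem_singleton_iff] at hb; subst hb; exact Or.inl hxy
    · rw [Set.mem_singleton_iff] at ha; subst ha; exact Or.inr hxy
    · rw [Set.mem_singleton_iff] at ha hb; subst ha; subst hb; exact absurd rfl hab
  obtain ⟨M, hM, -⟩ := hc.exists_maxChain
  refine ⟨Subtype.val '' M, ?_, ?_, ?_⟩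
  · rintro _ ⟨a, _, rfl⟩; exact a.2
  · rintro _ ⟨a, ha, rfl⟩ _ ⟨b, hb, rfl⟩ hne
    exact hM.1 ha hb (fun h => hne (by rw [h]))
  · intro C' hsubI hchain hsub
    have hD : IsChain (· ≤ ·) {a : S | ↑a ∈ C'} := by
      intro a ha b hb hne
      exact hchain ha hb (fun h => hne (Subtype.ext h))
    have hMD : M ⊆ {a : S | ↑a ∈ C'} := fun a ha => hsub ⟨a, ha, rfl⟩
    have := hM.2 hD hMD
    ext c
    constructor
    · intro hc
      have hcS : c ∈ S := hsubI hc
      have : (⟨c, hcS⟩ : S) ∈ M := by rw [this]; exact hc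
      exact ⟨⟨c, hcS⟩, this, rfl⟩
    · intro hc; exact hsub hc

lemma exists_covchain_of_maxChainIn {x y : P} (hxy : x ≤ y) {C : Set P}
    (hC : IsMaxChainIn (Set.Icc x y) C) (hfin : C.Finite) :
    ∃ n, ∃ f : ℕ → P, f 0 = x ∧ f n = y ∧ (∀ i < n, f i ⋖ f (i + 1)) ∧ C.ncard = n + 1 := by
  classical
  have hxC : x ∈ C := by
    have heq := hC.2.2 (C' := insert x C)
      (Set.insert_subset ⟨le_rfl, hxy⟩ hC.1)
      (hC.2.1.insert (fun b hb _ => Or.inl (hC.1 hb).1))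
      (Set.subset_insert _ _)
    rw [← heq]; exact Set.mem_insert _ _
  have hyC : y ∈ C := by
    have heq := hC.2.2 (C' := insert y C)
      (Set.insert_subset ⟨hxy, le_rfl⟩ hC.1)
      (hC.2.1.insert (fun b hb _ => Or.inr (hC.1 hb).2))
      (Set.subset_insert _ _)
    rw [← heq]; exact Set.mem_insert _ _
  haveI : Fintype C := hfin.fintype
  letI : LinearOrder C :=
    { (inferInstance : PartialOrder C) with
      le_total := fun a b => hC.2.1.total a.2 b.2
      toDecidableLE := Classical.decRel _ }
  have hpos : 0 < Fintype.card C := Fintype.card_pos_iff.mpr ⟨⟨x, hxC⟩⟩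
  set n := Fintype.card C - 1 with hn
  have hcard : Fintype.card C = n + 1 := by omega
  let e := monoEquivOfFin C hcard
  have hcov : ∀ i, ∀ _ : i < n, (↑(e ⟨i, by omega⟩) : P) ⋖ ↑(e ⟨i + 1, by omega⟩) := by
    intro i hi
    constructor
    · exact Subtype.coe_lt_coe.mpr (e.strictMono (by simp [Fin.lt_def]))
    · intro t h1t ht2
      have htI : t ∈ Set.Icc x y := by
        constructor
        · exact le_trans (hC.1 (e ⟨i, by omega⟩).2).1 h1t.le
        · exact le_trans ht2.le (hC.1 (e ⟨i + 1, by omega⟩).2).2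
      have hchain : IsChain (· ≤ ·) (insert t C) := by
        apply hC.2.1.insert
        intro b hb _
        obtain ⟨j, hj⟩ := e.surjective ⟨b, hb⟩
        rcases Nat.lt_or_ge (j : ℕ) (i + 1) with h | h
        · refine Or.inr (le_trans ?_ h1t.le)
          have : e j ≤ e ⟨i, by omega⟩ := e.monotone (by simp [Fin.le_def]; omega)
          rw [hj] at this
          exact this
        · refine Or.inl (le_trans ht2.le ?_)
          have : e ⟨i + 1, by omega⟩ ≤ e j := e.monotone (by simp [Fin.le_def]; omega)
          rw [hj] at this
          exact this
      have heq := hC.2.2 (Set.insert_subset htI hC.1) hchain (Set.subset_insert _ _)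
      have htC : t ∈ C := by rw [← heq]; exact Set.mem_insert _ _
      obtain ⟨j, hj⟩ := e.surjective ⟨t, htC⟩
      have h1 : (⟨i, by omega⟩ : Fin (n + 1)) < j := by
        apply e.lt_iff_lt.mp
        rw [hj]
        exact Subtype.coe_lt_coe.mp (by exact h1t)
      have h2 : j < (⟨i + 1, by omega⟩ : Fin (n + 1)) := by
        apply e.lt_iff_lt.mp
        rw [hj]
        exact Subtype.coe_lt_coe.mp (by exact ht2)
      rw [Fin.lt_def] at h1 h2
      simp at h1 h2
      omega
  refine ⟨n, fun i => ↑(e ⟨min i n, by omega⟩), ?_, ?_, ?_, ?_⟩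
  · have h1 : e ⟨min 0 n, by omega⟩ ≤ ⟨x, hxC⟩ := by
      obtain ⟨j, hj⟩ := e.surjective ⟨x, hxC⟩
      rw [← hj]
      exact e.monotone (by simp [Fin.le_def])
    exact le_antisymm (Subtype.coe_le_coe.mpr h1) (hC.1 (e _).2).1
  · have h1 : (⟨y, hyC⟩ : C) ≤ e ⟨min n n, by omega⟩ := by
      obtain ⟨j, hj⟩ := e.surjective ⟨y, hyC⟩
      rw [← hj]
      exact e.monotone (by simp [Fin.le_def]; omega)
    exact le_antisymm (hC.1 (e _).2).2 (Subtype.coe_le_coe.mpr h1)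
  · intro i hi
    have e1 : (⟨min i n, by omega⟩ : Fin (n + 1)) = ⟨i, by omega⟩ := by
      ext; simp; omega
    have e2 : (⟨min (i + 1) n, by omega⟩ : Fin (n + 1)) = ⟨i + 1, by omega⟩ := by
      ext; simp; omega
    simp only
    rw [e1, e2]
    exact hcov i hi
  · rw [Set.ncard_eq_toFinset_card' C, Set.toFinset_card]
    omega

lemma exists_covchain (hdisc : IsDiscretePoset P) {x y : P} (hxy : x ≤ y) :
    ∃ f : ℕ → P, f 0 = x ∧ f (intervalHeight x y) = y ∧
      ∀ i < intervalHeight x y, f i ⋖ f (i + 1) := by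
  obtain ⟨C, hC⟩ := exists_isMaxChainIn x y hxy
  obtain ⟨n, f, h0, hn, hf, hcard⟩ := exists_covchain_of_maxChainIn hxy hC (hdisc _ _ _ hC)
  have hne : {m : ℕ | ∃ C : Set P, IsMaxChainIn (Set.Icc x y) C ∧ C.Finite ∧
      C.ncard = m + 1}.Nonempty := ⟨n, C, hC, hdisc _ _ _ hC, hcard⟩
  have hmem := Nat.sInf_mem hne
  obtain ⟨C', hC', hfin', hcard'⟩ := hmem
  obtain ⟨m, g, hg0, hgm, hg, hgcard⟩ := exists_covchain_of_maxChainIn hxy hC' hfin'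
  have hm : m = intervalHeight x y := by
    have : m + 1 = sInf {m : ℕ | ∃ C : Set P, IsMaxChainIn (Set.Icc x y) C ∧ C.Finite ∧
        C.ncard = m + 1} + 1 := by rw [← hcard', hgcard]
    have h2 : intervalHeight x y = sInf {m : ℕ | ∃ C : Set P, IsMaxChainIn (Set.Icc x y) C ∧
        C.Finite ∧ C.ncard = m + 1} := rfl
    omega
  exact ⟨g, hg0, by rw [← hm]; exact hgm, by rw [← hm]; exact hg⟩

lemma intervalHeight_triangle (hdisc : IsDiscretePoset P) {x y z : P}
    (hxy : x ≤ y) (hyz : y ≤ z) :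
    intervalHeight x z ≤ intervalHeight x y + intervalHeight y z := by
  obtain ⟨f, hf0, hfa, hf⟩ := exists_covchain hdisc hxy
  obtain ⟨g, hg0, hgb, hg⟩ := exists_covchain hdisc hyz
  set a := intervalHeight x y
  set b := intervalHeight y z
  apply intervalHeight_le_covchain (f := fun i => if i ≤ a then f i else g (i - a)) (n := a + b)
  · simp [hf0]
  · rcases Nat.eq_zero_or_pos b with hb | hb
    · simp only [hb, Nat.add_zero, if_pos le_rfl, hfa]
      rw [← hg0, ← hgb, hb]
    · rw [if_neg (by omega)]
      have : a + b - a = b := by omega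
      rw [this, hgb]
  · intro i hi
    rcases Nat.lt_or_ge i a with h | h
    · rw [if_pos (by omega), if_pos (by omega)]
      exact hf i h
    · rcases Nat.eq_or_lt_of_le h with heq | h'
      · rw [if_pos (by omega), if_neg (by omega)]
        have h1 : i + 1 - a = 1 := by omega
        have h2 : f i = f a := by rw [heq]
        rw [h1, h2, hfa, ← hg0]
        exact hg 0 (by omega)
      · rw [if_neg (by omega), if_neg (by omega)]
        have h1 : i + 1 - a = (i - a) + 1 := by omega
        rw [h1]
        exact hg (i - a) (by omega)

end Aux

section Semi
variable {L : Type*} [SemilatticeSup L]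

lemma covby_sup_of_covby (hdisc : IsDiscretePoset L) (hsm : Semimodular L)
    {a b : L} (hab : a ⋖ b) (s : L) : s ⊔ a = s ⊔ b ∨ s ⊔ a ⋖ s ⊔ b := by
  by_cases hb : b ≤ s ⊔ a
  · left
    exact le_antisymm (sup_le_sup_left hab.le s) (sup_le le_sup_left hb)
  · right
    obtain ⟨t, ht0, htk, ht⟩ := exists_covchain hdisc (le_sup_right : a ≤ s ⊔ a)
    set k := intervalHeight a (s ⊔ a) with hk
    have key : ∀ i ≤ k, t i ⋖ t i ⊔ b := by
      intro i hi
      induction i with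
      | zero =>
        rw [ht0]
        have : a ⊔ b = b := sup_eq_right.mpr hab.le
        rw [this]
        exact hab
      | succ m ih =>
        have ihm := ih (by omega)
        have hcov : t m ⋖ t (m + 1) := ht m (by omega)
        have hne : t (m + 1) ≠ t m ⊔ b := by
          intro h
          apply hb
          have hb1 : b ≤ t (m + 1) := by rw [h]; exact le_sup_right
          have hb2 : t (m + 1) ≤ t k := by
            rcases Nat.eq_or_lt_of_le hi with heq | hlt
            · rw [heq]
            · exact covchain_le ht k le_rfl (m + 1) hi
          rw [htk] at hb2
          exact hb1.trans hb2
        have := hsm (t (m + 1)) (t m ⊔ b) (t m) hne hcov ihm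
        have hsup : t (m + 1) ⊔ (t m ⊔ b) = t (m + 1) ⊔ b := by
          rw [← sup_assoc, sup_eq_left.mpr hcov.le]
        rw [hsup] at this
        exact this.1
    have hfin := key k le_rfl
    rw [htk] at hfin
    have : s ⊔ a ⊔ b = s ⊔ b := by
      rw [sup_assoc, sup_eq_right.mpr hab.le]
    rwa [this] at hfin

lemma intervalHeight_sup_le (hdisc : IsDiscretePoset L) (hsm : Semimodular L)
    {y u v : L} (hyu : y ≤ u) (hyv : y ≤ v) :
    intervalHeight u (u ⊔ v) ≤ intervalHeight y v := by
  obtain ⟨g, hg0, hgm, hg⟩ := exists_covchain hdisc hyv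
  set m := intervalHeight y v with hm
  have key : ∀ i ≤ m, intervalHeight u (u ⊔ g i) ≤ i := by
    intro i hi
    induction i with
    | zero =>
      rw [hg0, sup_eq_left.mpr hyu]
      exact intervalHeight_self_le u
    | succ j ih =>
      have ihj := ih (by omega)
      rcases covby_sup_of_covby hdisc hsm (hg j (by omega)) u with heq | hcov
      · rw [← heq]
        omega
      · have h1 : intervalHeight u (u ⊔ g (j + 1)) ≤
            intervalHeight u (u ⊔ g j) + intervalHeight (u ⊔ g j) (u ⊔ g (j + 1)) :=
          intervalHeight_triangle hdisc le_sup_left hcov.le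
        have h2 := intervalHeight_covby_le hcov
        omega
  have := key m le_rfl
  rwa [hgm] at this

end Semi

/-- In a discrete, semimodular join semilattice the up–down distance (minimum of
`h(x,u) + h(y,u)` over common upper bounds `u`) satisfies the triangle inequality. -/
theorem stmt5 {L : Type*} [SemilatticeSup L]
    (hdisc : IsDiscretePoset L) (hsm : Semimodular L)
    (d : L → L → ℕ)
    (hd : ∀ x y : L, d x y =
      sInf {n : ℕ | ∃ u : L, x ≤ u ∧ y ≤ u ∧ n = intervalHeight x u + intervalHeight y u}) :
    ∀ x y z : L, d x z ≤ d x y + d y z := by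
  intro x y z
  have hne : ∀ p q : L, {n : ℕ | ∃ u : L, p ≤ u ∧ q ≤ u ∧
      n = intervalHeight p u + intervalHeight q u}.Nonempty :=
    fun p q => ⟨_, p ⊔ q, le_sup_left, le_sup_right, rfl⟩
  obtain ⟨u, hxu, hyu, hu⟩ : ∃ u : L, x ≤ u ∧ y ≤ u ∧
      d x y = intervalHeight x u + intervalHeight y u := by
    rw [hd x y]; exact Nat.sInf_mem (hne x y)
  obtain ⟨v, hyv, hzv, hv⟩ : ∃ v : L, y ≤ v ∧ z ≤ v ∧
      d y z = intervalHeight y v + intervalHeight z v := by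
    rw [hd y z]; exact Nat.sInf_mem (hne y z)
  have hdxz : d x z ≤ intervalHeight x (u ⊔ v) + intervalHeight z (u ⊔ v) := by
    rw [hd x z]
    exact Nat.sInf_le ⟨u ⊔ v, hxu.trans le_sup_left, hzv.trans le_sup_right, rfl⟩
  have h1 : intervalHeight x (u ⊔ v) ≤ intervalHeight x u + intervalHeight u (u ⊔ v) :=
    intervalHeight_triangle hdisc hxu le_sup_left
  have h2 : intervalHeight u (u ⊔ v) ≤ intervalHeight y v :=
    intervalHeight_sup_le hdisc hsm hyu hyv
  have h3 : intervalHeight z (u ⊔ v) ≤ intervalHeight z v + intervalHeight v (u ⊔ v) :=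
    intervalHeight_triangle hdisc hzv le_sup_right
  have h4 : intervalHeight v (u ⊔ v) ≤ intervalHeight y u := by
    have := intervalHeight_sup_le hdisc hsm hyv hyu
    rwa [sup_comm v u] at this
  omega
end

section
/- Let L be a discrete, semimodular join semilattice (every maximal chain in every closed interval is finite; whenever an element z is covered by both x and y, the join x ∨ y covers both x and y). Then the Chebyshev distance d(x,y) = max(h(x, x∨y), h(y, x∨y)) satisfies the triangle inequality: d(x,z) ≤ d(x,y) + d(y,z) for all x, y, z in L, and hence is a metric on L. -/
section Aux

variable {L : Type*} [PartialOrder L]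

/-- A covering sequence from `x` to `y` of length `n`. -/
inductive CovSeq : L → L → ℕ → Prop
  | refl (x : L) : CovSeq x x 0
  | step {x y z : L} {n : ℕ} : x ⋖ y → CovSeq y z n → CovSeq x z (n + 1)

theorem CovSeq.le {x y : L} {n : ℕ} (h : CovSeq x y n) : x ≤ y := by
  induction h with
  | refl => exact le_rfl
  | step hc _ ih => exact hc.le.trans ih

theorem CovSeq.trans {x y z : L} {m n : ℕ} (h : CovSeq x y m) (h' : CovSeq y z n) :
    CovSeq x z (m + n) := by
  induction h with
  | refl => simpa using h'
  | step hc _ ih => exact (Nat.succ_add _ _) ▸ CovSeq.step hc (ih h')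

theorem CovSeq.eq_of_zero {x y : L} (h : CovSeq x y 0) : x = y := by
  cases h; rfl

theorem CovSeq.zero_of_eq {x y : L} {n : ℕ} (h : CovSeq x y n) (hxy : y ≤ x) : n = 0 := by
  cases h with
  | refl => rfl
  | step hc h' => exact absurd (h'.le.trans hxy) (not_le_of_gt hc.lt)

theorem mem_of_comparable {I C : Set L} (hC : IsMaxChainIn I C) {z : L} (hz : z ∈ I)
    (hcomp : ∀ c ∈ C, z ≤ c ∨ c ≤ z) : z ∈ C := by
  have h1 : insert z C ⊆ I := Set.insert_subset hz hC.1
  have h2 : IsChain (· ≤ ·) (insert z C) :=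
    hC.2.1.insert fun b hb _ => hcomp b hb
  have := hC.2.2 h1 h2 (Set.subset_insert _ _)
  rw [← this]; exact Set.mem_insert _ _

theorem left_mem_maxChain {x y : L} {C : Set L} (hxy : x ≤ y)
    (hC : IsMaxChainIn (Set.Icc x y) C) : x ∈ C :=
  mem_of_comparable hC (Set.mem_Icc.2 ⟨le_rfl, hxy⟩) fun c hc => Or.inl (hC.1 hc).1

theorem right_mem_maxChain {x y : L} {C : Set L} (hxy : x ≤ y)
    (hC : IsMaxChainIn (Set.Icc x y) C) : y ∈ C :=
  mem_of_comparable hC (Set.mem_Icc.2 ⟨hxy, le_rfl⟩) fun c hc => Or.inr (hC.1 hc).2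

/-- From a finite maximal chain, extract a covering sequence. -/
theorem covSeq_of_maxChain : ∀ (n : ℕ) (x y : L) (C : Set L), x ≤ y →
    IsMaxChainIn (Set.Icc x y) C → C.Finite → C.ncard = n + 1 → CovSeq x y n := by
  intro n
  induction n with
  | zero =>
    intro x y C hxy hC hfin hcard
    obtain ⟨a, ha⟩ := Set.ncard_eq_one.1 hcard
    have hx : x ∈ C := left_mem_maxChain hxy hC
    have hy : y ∈ C := right_mem_maxChain hxy hC
    rw [ha, Set.mem_singleton_iff] at hx hy
    subst hx
    rw [hy]
    exact CovSeq.refl _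
  | succ n ih =>
    intro x y C hxy hC hfin hcard
    have hx : x ∈ C := left_mem_maxChain hxy hC
    have hy : y ∈ C := right_mem_maxChain hxy hC
    have hxney : x ≠ y := by
      rintro rfl
      have : C ⊆ {x} := by rw [← Set.Icc_self]; exact hC.1
      have : C.ncard ≤ 1 := by
        calc C.ncard ≤ ({x} : Set L).ncard := Set.ncard_le_ncard this (Set.finite_singleton x)
        _ = 1 := Set.ncard_singleton x
      omega
    -- C \ {x} is nonempty and finite
    have hne : (C \ {x}).Nonempty := ⟨y, hy, fun h => hxney h.symm⟩
    have hfin' : (C \ {x}).Finite := hfin.diff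
    obtain ⟨x', hx'mem, hx'min'⟩ := hfin'.exists_minimal hne
    have hx'min : ∀ b ∈ C \ {x}, b ≤ x' → x' = b := fun b hb h => le_antisymm (hx'min' hb h) h
    -- x' is the least element of C \ {x}
    have hleast : ∀ b ∈ C \ {x}, x' ≤ b := by
      intro b hb
      rcases eq_or_ne b x' with rfl | hbne
      · exact le_rfl
      · rcases hC.2.1 hb.1 hx'mem.1 hbne with h | h
        · exact (show x' = b from hx'min b hb h).le
        · exact h
    have hxlex' : x ≤ x' := (hC.1 hx'mem.1).1
    have hx'ley : x' ≤ y := (hC.1 hx'mem.1).2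
    have hxltx' : x < x' := lt_of_le_of_ne hxlex' (fun h => hx'mem.2 h.symm)
    have hcov : x ⋖ x' := by
      refine ⟨hxltx', fun z hz hz' => ?_⟩
      have hzI : z ∈ Set.Icc x y := ⟨hz.le, hz'.le.trans hx'ley⟩
      have hzC : z ∈ C := by
        refine mem_of_comparable hC hzI fun c hc => ?_
        rcases eq_or_ne c x with rfl | hcx
        · exact Or.inr hz.le
        · exact Or.inl (hz'.le.trans (hleast c ⟨hc, hcx⟩))
      have : x' ≤ z := hleast z ⟨hzC, hz.ne'⟩
      exact absurd (this.trans_lt hz') (lt_irrefl x')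
    -- C \ {x} is a maximal chain of [x', y]
    have hC' : IsMaxChainIn (Set.Icc x' y) (C \ {x}) := by
      refine ⟨fun c hc => ⟨hleast c hc, (hC.1 hc.1).2⟩, hC.2.1.mono Set.diff_subset, ?_⟩
      intro D hDI hDch hDsub
      have hxnD : x ∉ D := by
        intro hxD
        exact absurd ((hDI hxD).1.trans_lt hxltx') (lt_irrefl x')
      have h1 : insert x D ⊆ Set.Icc x y := by
        refine Set.insert_subset (Set.mem_Icc.2 ⟨le_rfl, hxy⟩) fun c hc => ?_
        exact ⟨hxlex'.trans (hDI hc).1, (hDI hc).2⟩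
      have h2 : IsChain (· ≤ ·) (insert x D) :=
        hDch.insert fun b hb _ => Or.inl (hxlex'.trans (hDI hb).1)
      have h3 : C ⊆ insert x D := by
        intro c hc
        rcases eq_or_ne c x with rfl | hcx
        · exact Set.mem_insert _ _
        · exact Set.mem_insert_of_mem _ (hDsub ⟨hc, hcx⟩)
      have heq := hC.2.2 h1 h2 h3
      ext z
      constructor
      · intro hz
        have : z ∈ C := by rw [← heq]; exact Set.mem_insert_of_mem _ hz
        exact ⟨this, fun h => hxnD (h ▸ hz)⟩
      · intro hz
        have : z ∈ insert x D := by rw [heq]; exact hz.1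
        rcases this with rfl | h
        · exact absurd rfl hz.2
        · exact h
    have hcard' : (C \ {x}).ncard = n + 1 := by
      rw [Set.ncard_diff_singleton_of_mem hx]; omega
    exact CovSeq.step hcov (ih x' y (C \ {x}) hx'ley hC' hfin' hcard')

/-- From a covering sequence, build a finite maximal chain. -/
theorem maxChain_of_covSeq {x y : L} {n : ℕ} (h : CovSeq x y n) :
    ∃ C : Set L, IsMaxChainIn (Set.Icc x y) C ∧ C.Finite ∧ C.ncard = n + 1 := by
  induction h with
  | refl x =>
    refine ⟨{x}, ⟨?_, ?_, ?_⟩, Set.finite_singleton x, Set.ncard_singleton x⟩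
    · rw [Set.Icc_self]
    · intro a ha b hb hab
      rw [Set.mem_singleton_iff] at ha hb
      exact absurd (ha.trans hb.symm) hab
    · intro C' hC'I _ hsub
      rw [Set.Icc_self] at hC'I
      exact Set.Subset.antisymm hC'I hsub
  | @step x x₁ y n hcov hseq ih =>
    obtain ⟨C, hC, hfin, hcard⟩ := ih
    have hx₁C : x₁ ∈ C := left_mem_maxChain hseq.le hC
    have hxy : x ≤ y := hcov.le.trans hseq.le
    have hxnotC : x ∉ C := fun h => absurd ((hC.1 h).1.trans_lt hcov.lt) (lt_irrefl _)
    refine ⟨insert x C, ⟨?_, ?_, ?_⟩, hfin.insert x, ?_⟩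
    · refine Set.insert_subset ⟨le_rfl, hxy⟩ fun c hc => ⟨hcov.le.trans (hC.1 hc).1, (hC.1 hc).2⟩
    · exact hC.2.1.insert fun b hb _ => Or.inl (hcov.le.trans (hC.1 hb).1)
    · intro D hDI hDch hDsub
      have hCD : C ⊆ D := (Set.subset_insert _ _).trans hDsub
      have hxD : x ∈ D := hDsub (Set.mem_insert _ _)
      refine Set.Subset.antisymm (fun w hw => ?_) hDsub
      rcases eq_or_ne w x with rfl | hwx
      · exact Set.mem_insert _ _
      have hwx₁ : w ≤ x₁ ∨ x₁ ≤ w := by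
        rcases eq_or_ne w x₁ with rfl | hwx₁
        · exact Or.inl le_rfl
        · rcases hDch hw (hCD hx₁C) hwx₁ with h | h
          · exact Or.inl h
          · exact Or.inr h
      rcases hwx₁ with h | h
      · -- x ≤ w ≤ x₁, cover: w = x or w = x₁
        have hxw : x ≤ w := (hDI hw).1
        rcases eq_or_lt_of_le h with rfl | hlt
        · exact Set.mem_insert_of_mem _ hx₁C
        · have := hcov.2 (lt_of_le_of_ne hxw (Ne.symm hwx)) hlt
          exact absurd this not_false
      · -- x₁ ≤ w : w ∈ Icc x₁ y and comparable with all of C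
        have hwI : w ∈ Set.Icc x₁ y := ⟨h, (hDI hw).2⟩
        refine Set.mem_insert_of_mem _ (mem_of_comparable hC hwI fun c hc => ?_)
        rcases eq_or_ne w c with rfl | hwc
        · exact Or.inl le_rfl
        · exact hDch hw (hCD hc) hwc
    · rw [Set.ncard_insert_of_notMem hxnotC hfin, hcard]

end Aux

section Semi

variable {L : Type*} [SemilatticeSup L]

/-- Existence of a finite maximal chain (hence covering sequence) in a discrete poset. -/
theorem exists_covSeq (hdisc : IsDiscretePoset L) {x y : L} (hxy : x ≤ y) :
    ∃ n, CovSeq x y n := by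
  -- Zorn on the subtype
  have hchain : IsChain (· ≤ ·) ({⟨x, Set.mem_Icc.2 ⟨le_rfl, hxy⟩⟩,
      ⟨y, Set.mem_Icc.2 ⟨hxy, le_rfl⟩⟩} : Set (Set.Icc x y)) := by
    intro a ha b hb hab
    rcases ha with rfl | ha <;> rcases hb with rfl | hb
    · exact absurd rfl hab
    · rw [Set.mem_singleton_iff] at hb; subst hb; exact Or.inl hxy
    · rw [Set.mem_singleton_iff] at ha; subst ha; exact Or.inr hxy
    · rw [Set.mem_singleton_iff] at ha hb; subst ha; subst hb; exact absurd rfl hab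
  obtain ⟨t, ht, hsub⟩ := hchain.exists_maxChain
  set C : Set L := Subtype.val '' t with hCdef
  have hCmax : IsMaxChainIn (Set.Icc x y) C := by
    refine ⟨?_, ?_, ?_⟩
    case refine_2 => exact IsChain.image_of_map_rel (· ≤ ·) (· ≤ ·) Subtype.val (fun _ _ h => h) ht.1
    · rintro c ⟨a, _, rfl⟩; exact a.2
    · intro C' hC'I hC'ch hsubC
      set t' : Set (Set.Icc x y) := {a | a.1 ∈ C'} with ht'def
      have ht'ch : IsChain (· ≤ ·) t' := by
        intro a ha b hb hab
        exact hC'ch ha hb (fun h => hab (Subtype.ext h))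
      have htt' : t ⊆ t' := fun a ha => hsubC ⟨a, ha, rfl⟩
      have heq : t = t' := ht.2 ht'ch htt'
      refine Set.Subset.antisymm (fun z hz => ?_) hsubC
      have : (⟨z, hC'I hz⟩ : Set.Icc x y) ∈ t' := hz
      rw [← heq] at this
      exact ⟨_, this, rfl⟩
  have hfin : C.Finite := hdisc x y C hCmax
  have hne : C.Nonempty := ⟨x, left_mem_maxChain hxy hCmax⟩
  have hpos : 0 < C.ncard := (Set.ncard_pos hfin).2 hne
  exact ⟨C.ncard - 1, covSeq_of_maxChain _ x y C hxy hCmax hfin (by omega)⟩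

variable (hdisc : IsDiscretePoset L) (hsm : Semimodular L)
include hdisc hsm

/-- Birkhoff step: covers are preserved (or collapsed) under joins. -/
theorem cover_claim : ∀ {k : ℕ} {u w : L}, CovSeq u w k → ∀ v, u ⋖ v → v ≤ w ∨ w ⋖ v ⊔ w := by
  intro k u w h
  induction h with
  | refl u =>
    intro v hv
    right
    have : v ⊔ u = v := sup_eq_left.2 hv.le
    rw [sup_eq_left.2 hv.le]
    exact hv
  | @step u u₁ w n hc hseq ih =>
    intro v hv
    rcases eq_or_ne v u₁ with rfl | hne
    · exact Or.inl hseq.le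
    · have hsemi := hsm u₁ v u (Ne.symm hne) hc hv
      rcases ih (u₁ ⊔ v) hsemi.1 with h | h
      · exact Or.inl (le_sup_right.trans h)
      · right
        have : u₁ ⊔ v ⊔ w = v ⊔ w := by
          rw [sup_comm u₁ v, sup_assoc, sup_eq_right.2 hseq.le]
        rwa [this] at h

theorem cover_sup {u v : L} (hc : u ⋖ v) (c : L) : u ⊔ c = v ⊔ c ∨ (u ⊔ c) ⋖ (v ⊔ c) := by
  obtain ⟨k, hk⟩ := exists_covSeq hdisc (le_sup_left : u ≤ u ⊔ c)
  rcases cover_claim hdisc hsm hk v hc with h | h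
  · left
    exact le_antisymm (sup_le (hc.le.trans le_sup_left) le_sup_right)
      (sup_le h le_sup_right)
  · right
    have : v ⊔ (u ⊔ c) = v ⊔ c := by rw [← sup_assoc, sup_eq_left.2 hc.le]
    rwa [this] at h

/-- Translation: covering sequences shrink (weakly) under joins. -/
theorem covSeq_sup : ∀ {n : ℕ} {a b : L}, CovSeq a b n → ∀ c, ∃ m ≤ n, CovSeq (a ⊔ c) (b ⊔ c) m := by
  intro n a b h
  induction h with
  | refl a => exact fun c => ⟨0, le_rfl, CovSeq.refl _⟩
  | @step a a₁ b n hc hseq ih =>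
    intro c
    obtain ⟨m, hm, hmseq⟩ := ih c
    rcases cover_sup hdisc hsm hc c with h | h
    · exact ⟨m, by omega, h ▸ hmseq⟩
    · exact ⟨m + 1, by omega, CovSeq.step h hmseq⟩

/-- Jordan–Dedekind for covering sequences. -/
theorem covSeq_unique : ∀ (N : ℕ) {x y : L} {m n : ℕ}, CovSeq x y m → CovSeq x y n →
    m ≤ N → m = n := by
  intro N
  induction N with
  | zero =>
    intro x y m n hm hn hmN
    have : m = 0 := by omega
    subst this
    exact (hn.zero_of_eq hm.eq_of_zero.ge).symm
  | succ N ih =>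
    intro x y m n hm hn hmN
    cases hm with
    | refl => exact (hn.zero_of_eq le_rfl).symm
    | @step _ x₁ _ m' hcx hm' =>
      cases hn with
      | refl => exact absurd (hcx.lt.trans_le hm'.le) (lt_irrefl x)
      | @step _ y₁ _ n' hcy hn' =>
        rcases eq_or_ne x₁ y₁ with rfl | hne
        · rw [ih hm' hn' (by omega)]
        · have hsemi := hsm x₁ y₁ x hne hcx hcy
          have htley : x₁ ⊔ y₁ ≤ y := sup_le hm'.le hn'.le
          obtain ⟨k, hk⟩ := exists_covSeq hdisc htley
          have h1 : CovSeq x₁ y (k + 1) := by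
            have := CovSeq.trans (CovSeq.step hsemi.1 (CovSeq.refl _)) hk
            simpa [Nat.add_comm] using this
          have h2 : CovSeq y₁ y (k + 1) := by
            have := CovSeq.trans (CovSeq.step hsemi.2 (CovSeq.refl _)) hk
            simpa [Nat.add_comm] using this
          have hmk : m' = k + 1 := ih hm' h1 (by omega)
          have hnk : k + 1 = n' := ih h2 hn' (by omega)
          omega

theorem covSeq_unique' {x y : L} {m n : ℕ} (hm : CovSeq x y m) (hn : CovSeq x y n) : m = n :=
  covSeq_unique hdisc hsm m hm hn le_rfl

/-- intervalHeight agrees with covering sequence length. -/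
theorem intervalHeight_eq {x y : L} {n : ℕ} (h : CovSeq x y n) : intervalHeight x y = n := by
  have hset : {k : ℕ | ∃ C : Set L, IsMaxChainIn (Set.Icc x y) C ∧ C.Finite ∧ C.ncard = k + 1}
      = {n} := by
    ext k
    simp only [Set.mem_setOf_eq, Set.mem_singleton_iff]
    constructor
    · rintro ⟨C, hC, hfin, hcard⟩
      exact covSeq_unique' hdisc hsm (covSeq_of_maxChain k x y C h.le hC hfin hcard) h
    · rintro rfl
      exact maxChain_of_covSeq h
  rw [intervalHeight, hset, csInf_singleton]

theorem height_exists (x y : L) (hxy : x ≤ y) : CovSeq x y (intervalHeight x y) := by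
  obtain ⟨n, hn⟩ := exists_covSeq hdisc hxy
  rwa [intervalHeight_eq hdisc hsm hn]

theorem height_add {x y z : L} (hxy : x ≤ y) (hyz : y ≤ z) :
    intervalHeight x z = intervalHeight x y + intervalHeight y z :=
  intervalHeight_eq hdisc hsm
    ((height_exists hdisc hsm x y hxy).trans (height_exists hdisc hsm y z hyz))

theorem height_mono {x y z : L} (hxy : x ≤ y) (hyz : y ≤ z) :
    intervalHeight x y ≤ intervalHeight x z := by
  rw [height_add hdisc hsm hxy hyz]; omega

theorem height_sup_le {a b : L} (hab : a ≤ b) (c : L) :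
    intervalHeight (a ⊔ c) (b ⊔ c) ≤ intervalHeight a b := by
  obtain ⟨m, hm, hmseq⟩ := covSeq_sup hdisc hsm (height_exists hdisc hsm a b hab) c
  rw [intervalHeight_eq hdisc hsm hmseq]
  exact hm

theorem height_self (x : L) : intervalHeight x x = 0 :=
  intervalHeight_eq hdisc hsm (CovSeq.refl x)

theorem height_eq_zero {x y : L} (hxy : x ≤ y) (h : intervalHeight x y = 0) : x = y :=
  CovSeq.eq_of_zero (h ▸ height_exists hdisc hsm x y hxy)

end Semi

/-- In a discrete, semimodular join semilattice, the Chebyshev distance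
`d(x,y) = max(h(x, x∨y), h(y, x∨y))` satisfies the triangle inequality, and is a metric. -/
theorem stmt9 {L : Type*} [SemilatticeSup L]
    (hdisc : IsDiscretePoset L) (hsm : Semimodular L)
    (d : L → L → ℕ)
    (hd : ∀ x y : L, d x y = max (intervalHeight x (x ⊔ y)) (intervalHeight y (x ⊔ y))) :
    (∀ x y z : L, d x z ≤ d x y + d y z) ∧
    (∀ x y : L, d x y = d y x) ∧
    (∀ x y : L, d x y = 0 ↔ x = y) := by
  have hsym : ∀ x y : L, d x y = d y x := by
    intro x y
    rw [hd, hd, sup_comm y x, Nat.max_comm]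
  refine ⟨?_, hsym, ?_⟩
  · intro x y z
    rw [hd, hd, hd]
    set a := x ⊔ y with ha
    set b := y ⊔ z with hb
    set s := x ⊔ y ⊔ z with hs
    have hxs : x ≤ s := le_sup_left.trans le_sup_left
    have hzs : z ≤ s := le_sup_right
    have hxzs : x ⊔ z ≤ s := sup_le hxs hzs
    have has : a ≤ s := le_sup_left
    have hbs : b ≤ s := sup_le (le_sup_right.trans le_sup_left) le_sup_right
    have hya : y ≤ a := le_sup_right
    have hyb : y ≤ b := le_sup_left
    have hba : b ⊔ a = s := by
      rw [hb, ha, hs]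
      apply le_antisymm
      · exact sup_le (sup_le (le_sup_right.trans le_sup_left) le_sup_right) le_sup_left
      · exact sup_le le_sup_right (le_sup_right.trans le_sup_left)
    have hab : a ⊔ b = s := by rw [sup_comm a b, hba]
    have hAs : intervalHeight a s ≤ intervalHeight y b := by
      have := height_sup_le hdisc hsm hyb a
      rwa [sup_eq_right.2 hya, hba] at this
    have hBs : intervalHeight b s ≤ intervalHeight y a := by
      have := height_sup_le hdisc hsm hya b
      rwa [sup_eq_right.2 hyb, hab] at this
    have A : intervalHeight x (x ⊔ z) ≤ intervalHeight x a + intervalHeight y b := by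
      calc intervalHeight x (x ⊔ z) ≤ intervalHeight x s :=
            height_mono hdisc hsm le_sup_left hxzs
        _ = intervalHeight x a + intervalHeight a s := height_add hdisc hsm le_sup_left has
        _ ≤ intervalHeight x a + intervalHeight y b := by omega
    have B : intervalHeight z (x ⊔ z) ≤ intervalHeight y a + intervalHeight z b := by
      calc intervalHeight z (x ⊔ z) ≤ intervalHeight z s :=
            height_mono hdisc hsm le_sup_right hxzs
        _ = intervalHeight z b + intervalHeight b s := height_add hdisc hsm le_sup_right hbs
        _ ≤ intervalHeight y a + intervalHeight z b := by omega
    exact max_le (A.trans (add_le_add (le_max_left _ _) (le_max_left _ _)))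
      (B.trans (add_le_add (le_max_right _ _) (le_max_right _ _)))
  · intro x y
    rw [hd]
    constructor
    · intro h
      have h1 : intervalHeight x (x ⊔ y) = 0 := by omega
      have h2 : intervalHeight y (x ⊔ y) = 0 := by omega
      have e1 := height_eq_zero hdisc hsm le_sup_left h1
      have e2 := height_eq_zero hdisc hsm le_sup_right h2
      rw [← e1] at e2
      exact e2.symm
    · rintro rfl
      have hxx : x ⊔ x = x := sup_idem x
      rw [hxx, height_self hdisc hsm, Nat.max_self]
end

section
/- Let L be a discrete join semilattice (every maximal chain in every closed interval is finite). Then L is semimodular (whenever an element z is covered by both x and y, the join x ∨ y covers both x and y) if and only if for all elements x, y, z with z ≤ x and z ≤ y, one has h(x, x∨y) ≤ h(z, y). -/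
namespace Stmt12Aux

variable {P : Type*} [PartialOrder P]

/-- A chain of covers of length `n` from `x` to `y`. -/
def CovChain : ℕ → P → P → Prop
  | 0, x, y => x = y
  | n+1, x, y => ∃ c, x ⋖ c ∧ CovChain n c y

lemma covChain_zero {x y : P} : CovChain 0 x y ↔ x = y := Iff.rfl

lemma covChain_succ {n : ℕ} {x y : P} :
    CovChain (n+1) x y ↔ ∃ c, x ⋖ c ∧ CovChain n c y := Iff.rfl

lemma CovChain.le : ∀ {n : ℕ} {x y : P}, CovChain n x y → x ≤ y
  | 0, _, _, h => le_of_eq h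
  | n+1, _, _, ⟨_, hc, h⟩ => hc.le.trans (CovChain.le h)

lemma mem_left_of_maxChainIn {x y : P} (hxy : x ≤ y) {C : Set P}
    (h : IsMaxChainIn (Set.Icc x y) C) : x ∈ C := by
  obtain ⟨hsub, hch, hmax⟩ := h
  have heq : insert x C = C :=
    hmax (Set.insert_subset ⟨le_rfl, hxy⟩ hsub)
      (hch.insert fun b hb _ => Or.inl (hsub hb).1) (Set.subset_insert _ _)
  rw [← heq]; exact Set.mem_insert _ _

lemma mem_right_of_maxChainIn {x y : P} (hxy : x ≤ y) {C : Set P}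
    (h : IsMaxChainIn (Set.Icc x y) C) : y ∈ C := by
  obtain ⟨hsub, hch, hmax⟩ := h
  have heq : insert y C = C :=
    hmax (Set.insert_subset ⟨hxy, le_rfl⟩ hsub)
      (hch.insert fun b hb _ => Or.inr (hsub hb).2) (Set.subset_insert _ _)
  rw [← heq]; exact Set.mem_insert _ _

lemma covChain_maxChain : ∀ {n : ℕ} {x y : P}, CovChain n x y →
    ∃ C : Set P, IsMaxChainIn (Set.Icc x y) C ∧ C.Finite ∧ C.ncard = n + 1 := by
  intro n
  induction n with
  | zero =>
    intro x y h
    have hxy : x = y := h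
    subst hxy
    refine ⟨{x}, ⟨?_, Set.subsingleton_singleton.isChain, ?_⟩, Set.finite_singleton x,
      Set.ncard_singleton x⟩
    · simp [Set.Icc_self]
    · intro C' hsub _ hxC'
      rw [Set.Icc_self] at hsub
      exact hsub.antisymm hxC'
  | succ n ih =>
    rintro x y ⟨c, hxc, hch⟩
    obtain ⟨C, ⟨hsub, hchain, hmax⟩, hfin, hcard⟩ := ih hch
    have hcy : c ≤ y := hch.le
    have hxnotC : x ∉ C := fun hx => absurd (hsub hx).1 (not_le_of_gt hxc.lt)
    refine ⟨insert x C, ⟨?_, ?_, ?_⟩, hfin.insert x, ?_⟩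
    · exact Set.insert_subset ⟨le_rfl, hxc.le.trans hcy⟩
        (hsub.trans (Set.Icc_subset_Icc_left hxc.le))
    · exact hchain.insert fun b hb _ => Or.inl (hxc.le.trans (hsub hb).1)
    · intro C' hC'sub hC'ch hDC'
      have hcC : c ∈ C := mem_left_of_maxChainIn hcy ⟨hsub, hchain, hmax⟩
      have hCC' : C ⊆ C' := (Set.subset_insert _ _).trans hDC'
      have hinter : C' ∩ Set.Icc c y = C :=
        hmax Set.inter_subset_right (hC'ch.mono Set.inter_subset_left)
          (Set.subset_inter hCC' hsub)
      apply Set.Subset.antisymm _ hDC'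
      intro u hu
      rcases eq_or_ne u c with rfl | hne
      · exact Set.mem_insert_of_mem _ hcC
      rcases hC'ch hu (hCC' hcC) hne with hle | hle
      · -- u ≤ c
        rcases hxc.eq_or_eq (hC'sub hu).1 hle with h | h
        · exact h ▸ Set.mem_insert _ _
        · exact Set.mem_insert_of_mem _ (h ▸ hcC)
      · -- c ≤ u
        have : u ∈ C' ∩ Set.Icc c y := ⟨hu, hle, (hC'sub hu).2⟩
        exact Set.mem_insert_of_mem _ (hinter ▸ this)
    · rw [Set.ncard_insert_of_notMem hxnotC hfin, hcard]

lemma maxChain_covChain : ∀ {n : ℕ} {x y : P} {C : Set P}, x ≤ y →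
    IsMaxChainIn (Set.Icc x y) C → C.Finite → C.ncard = n + 1 → CovChain n x y := by
  intro n
  induction n with
  | zero =>
    intro x y C hxy hC hfin hcard
    obtain ⟨a, ha⟩ := Set.ncard_eq_one.mp hcard
    have hx := mem_left_of_maxChainIn hxy hC
    have hy := mem_right_of_maxChainIn hxy hC
    rw [ha] at hx hy
    show x = y
    rw [Set.mem_singleton_iff.mp hx, Set.mem_singleton_iff.mp hy]
  | succ n ih =>
    intro x y C hxy hC hfin hcard
    obtain ⟨hsub, hchain, hmax⟩ := hC
    have hx := mem_left_of_maxChainIn hxy ⟨hsub, hchain, hmax⟩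
    -- C \ {x} is nonempty
    have hne : (C \ {x}).Nonempty := by
      rw [Set.nonempty_iff_ne_empty]
      intro h
      have : C ⊆ {x} := fun u hu => by
        by_contra hux
        exact absurd ⟨hu, hux⟩ (h ▸ Set.notMem_empty u)
      have : C.ncard ≤ 1 := le_trans (Set.ncard_le_ncard this (Set.finite_singleton x))
        (le_of_eq (Set.ncard_singleton x))
      omega
    obtain ⟨c, hcmem, hcmin⟩ :=
      Set.Finite.exists_minimalFor id _ (hfin.diff (t := {x})) hne
    have hcmin' : ∀ u ∈ C \ {x}, c ≤ u := by
      intro u hu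
      rcases eq_or_ne u c with rfl | hne'
      · exact le_rfl
      rcases hchain hu.1 hcmem.1 hne' with h | h
      · exact hcmin hu h
      · exact h
    have hxc : x < c := lt_of_le_of_ne (hsub hcmem.1).1 (fun h => hcmem.2 h.symm)
    have hcy : c ≤ y := (hsub hcmem.1).2
    have hcov : x ⋖ c := by
      refine ⟨hxc, fun u hxu huc => ?_⟩
      have huC : u ∈ C := by
        have heq : insert u C = C := by
          apply hmax
          · exact Set.insert_subset ⟨hxu.le, huc.le.trans hcy⟩ hsub
          · refine hchain.insert fun b hb hne' => ?_
            rcases eq_or_ne b x with rfl | hbx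
            · exact Or.inr hxu.le
            · exact Or.inl (huc.le.trans (hcmin' b ⟨hb, hbx⟩))
          · exact Set.subset_insert _ _
        rw [← heq]; exact Set.mem_insert _ _
      exact absurd (hcmin' u ⟨huC, fun h => absurd (h ▸ hxu) (lt_irrefl x)⟩)
        (not_le_of_gt huc)
    refine ⟨c, hcov, ih (C := C \ {x}) hcy ⟨?_, hchain.mono Set.diff_subset, ?_⟩ hfin.diff ?_⟩
    · exact fun u hu => ⟨hcmin' u hu, (hsub hu.1).2⟩
    · intro C' hC'sub hC'ch hCC'
      have hxnot : x ∉ C' := fun h => absurd (hC'sub h).1 (not_le_of_gt hxc)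
      have heq : insert x C' = C := by
        apply hmax
        · exact Set.insert_subset ⟨le_rfl, hxy⟩
            (fun u hu => ⟨hxc.le.trans (hC'sub hu).1, (hC'sub hu).2⟩)
        · exact hC'ch.insert fun b hb _ => Or.inl (hxc.le.trans (hC'sub hb).1)
        · intro u hu
          rcases eq_or_ne u x with rfl | hux
          · exact Set.mem_insert _ _
          · exact Set.mem_insert_of_mem _ (hCC' ⟨hu, hux⟩)
      apply Set.Subset.antisymm _ hCC'
      intro u hu
      have : u ∈ C := heq ▸ Set.mem_insert_of_mem x hu
      exact ⟨this, fun h => hxnot ((Set.mem_singleton_iff.mp h) ▸ hu)⟩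
    · have := Set.ncard_diff_singleton_add_one hx hfin
      omega

lemma exists_maxChainIn {x y : P} (hxy : x ≤ y) :
    ∃ C, IsMaxChainIn (Set.Icc x y) C := by
  have hempty : IsChain (· ≤ ·) (∅ : Set ↥(Set.Icc x y)) := IsChain.empty
  obtain ⟨M, hM, -⟩ := hempty.exists_maxChain
  obtain ⟨hMch, hMmax⟩ := hM
  refine ⟨Subtype.val '' M, fun u ⟨u', _, h⟩ => h ▸ u'.2, ?_, ?_⟩
  · rintro u ⟨u', hu', rfl⟩ v ⟨v', hv', rfl⟩ hne
    exact hMch hu' hv' (fun h => hne (congrArg Subtype.val h))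
  · intro C' hC'sub hC'ch hCC'
    set M' : Set ↥(Set.Icc x y) := {u | ↑u ∈ C'} with hM'
    have hM'ch : IsChain (· ≤ ·) M' := by
      intro u hu v hv hne
      exact hC'ch hu hv (fun h => hne (Subtype.coe_injective h))
    have hMM' : M ⊆ M' := fun u hu => hCC' ⟨u, hu, rfl⟩
    have heq : M' = M := (hMmax hM'ch hMM').symm
    apply Set.Subset.antisymm _ hCC'
    intro u hu
    have : (⟨u, hC'sub hu⟩ : ↥(Set.Icc x y)) ∈ M := heq ▸ hu
    exact ⟨_, this, rfl⟩

end Stmt12Aux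

namespace Stmt12Aux

variable {P : Type*} [PartialOrder P]

lemma covChain_height {n : ℕ} {x y : P} (h : CovChain n x y) :
    intervalHeight x y ≤ n :=
  Nat.sInf_le (covChain_maxChain h)

lemma height_covChain (hdisc : IsDiscretePoset P) {x y : P} (hxy : x ≤ y) :
    CovChain (intervalHeight x y) x y := by
  have hne : {n : ℕ | ∃ C : Set P,
      IsMaxChainIn (Set.Icc x y) C ∧ C.Finite ∧ C.ncard = n + 1}.Nonempty := by
    obtain ⟨C, hC⟩ := exists_maxChainIn hxy
    have hfin := hdisc x y C hC
    have hxC : x ∈ C := mem_left_of_maxChainIn hxy hC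
    have hpos : 0 < C.ncard := Set.ncard_pos hfin |>.mpr ⟨x, hxC⟩
    exact ⟨C.ncard - 1, C, hC, hfin, by omega⟩
  obtain ⟨C, hC, hfin, hcard⟩ := Nat.sInf_mem hne
  exact maxChain_covChain hxy hC hfin hcard

variable {L : Type*} [SemilatticeSup L]

/-- From semimodularity: if `z ⋖ c` and there is a cover chain from `z` to `x`,
then `c ≤ x` or `x ⋖ x ⊔ c`. -/
lemma semimod_cov (hsm : Semimodular L) :
    ∀ {k : ℕ} {z x c : L}, CovChain k z x → z ⋖ c → c ≤ x ∨ x ⋖ x ⊔ c := by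
  intro k
  induction k with
  | zero =>
    intro z x c h hzc
    have hzx : z = x := h
    subst hzx
    right
    rw [sup_eq_right.mpr hzc.le]
    exact hzc
  | succ k ih =>
    rintro z x c ⟨x1, hzx1, hch⟩ hzc
    rcases eq_or_ne x1 c with rfl | hne
    · exact Or.inl hch.le
    obtain ⟨h1, -⟩ := hsm x1 c z hne hzx1 hzc
    rcases ih hch h1 with hle | hcov
    · exact Or.inl (le_sup_right.trans hle)
    · have heq : x ⊔ (x1 ⊔ c) = x ⊔ c := by
        rw [← sup_assoc, sup_eq_left.mpr hch.le]
      rw [heq] at hcov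
      exact Or.inr hcov

lemma semimod_main (hdisc : IsDiscretePoset L) (hsm : Semimodular L) :
    ∀ {n : ℕ} {x y z : L}, z ≤ x → z ≤ y → CovChain n z y →
      ∃ m ≤ n, CovChain m x (x ⊔ y) := by
  intro n
  induction n with
  | zero =>
    intro x y z hzx hzy h
    have hzy' : z = y := h
    subst hzy'
    exact ⟨0, le_rfl, (sup_eq_left.mpr hzx).symm⟩
  | succ n ih =>
    rintro x y z hzx hzy ⟨c, hzc, hch⟩
    have hk := height_covChain hdisc hzx
    rcases semimod_cov hsm hk hzc with hcx | hcov
    · obtain ⟨m, hm, hcc⟩ := ih hcx hch.le hch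
      exact ⟨m, hm.trans (Nat.le_succ n), hcc⟩
    · obtain ⟨m, hm, hcc⟩ := ih (x := x ⊔ c) (z := c) le_sup_right hch.le hch
      have heq : (x ⊔ c) ⊔ y = x ⊔ y := by
        rw [sup_assoc, sup_eq_right.mpr hch.le]
      rw [heq] at hcc
      exact ⟨m + 1, Nat.succ_le_succ hm, ⟨x ⊔ c, hcov, hcc⟩⟩

lemma back_aux (hdisc : IsDiscretePoset L)
    (h : ∀ x y z : L, z ≤ x → z ≤ y → intervalHeight x (x ⊔ y) ≤ intervalHeight z y)
    {x y z : L} (hne : x ≠ y) (hzx : z ⋖ x) (hzy : z ⋖ y) : x ⋖ x ⊔ y := by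
  have h1 : intervalHeight z y ≤ 1 := covChain_height ⟨y, hzy, rfl⟩
  have h2 : intervalHeight x (x ⊔ y) ≤ 1 := (h x y z hzx.le hzy.le).trans h1
  have hcc := height_covChain hdisc (le_sup_left : x ≤ x ⊔ y)
  have hyx : ¬ y ≤ x := by
    intro hyx
    rcases (hzx.eq_or_eq hzy.le hyx) with h | h
    · exact hzy.ne h.symm
    · exact hne h.symm
  rcases Nat.le_one_iff_eq_zero_or_eq_one.mp h2 with h0 | h1'
  · rw [h0] at hcc
    have hx : x = x ⊔ y := hcc
    exact absurd (sup_eq_left.mp hx.symm) hyx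
  · rw [h1'] at hcc
    obtain ⟨c, hxc, hcy⟩ := hcc
    have hc : c = x ⊔ y := hcy
    exact hc ▸ hxc

end Stmt12Aux

/-- A discrete join semilattice is semimodular iff whenever `x, y` have a common lower
bound `z`, one has `h(x, x∨y) ≤ h(z, y)`. -/
theorem stmt12 {L : Type*} [SemilatticeSup L] (hdisc : IsDiscretePoset L) :
    Semimodular L ↔
      ∀ x y z : L, z ≤ x → z ≤ y → intervalHeight x (x ⊔ y) ≤ intervalHeight z y := by
  constructor
  · intro hsm x y z hzx hzy
    have hc := Stmt12Aux.height_covChain hdisc hzy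
    obtain ⟨m, hm, hcc⟩ := Stmt12Aux.semimod_main hdisc hsm hzx hzy hc
    exact (Stmt12Aux.covChain_height hcc).trans hm
  · intro h x y z hne hzx hzy
    refine ⟨Stmt12Aux.back_aux hdisc h hne hzx hzy, ?_⟩
    have := Stmt12Aux.back_aux hdisc h hne.symm hzy hzx
    rwa [sup_comm] at this
end
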